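/- (L∞ bound for saturation) Suppose 0 ≤ s_i^0 ≤ 1 for all i and λM ≤ 1. Then the DFLU scheme s_i^{n+1} = s_i^n − λ(F^n_{i+1/2} − F^n_{i−1/2}) satisfies 0 ≤ s_i^n ≤ 1 for all i and n. -/

import Mathlib

/-!
Both interface fluxes are nonnegative, and since `f(·, c)` vanishes at `0` and `1` with slope at
most `M`, the outgoing flux `F_{i+1/2} ≤ f(min(s_i, θ), c_i)` is at most `M s_i`, while the
incoming flux `F_{i-1/2} ≤ f(max(s_i, θ), c_i)` is at most `M (1 - s_i)`. Under `λM ≤ 1` one step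
of the scheme therefore keeps `s_i` in `[0, 1]`, and the bound follows by induction on `n`.
-/

open Set

section SlopeBounds

variable {g : ℝ → ℝ} {M x : ℝ}

lemma abs_sub_le_of_abs_deriv_le_on_unitInterval
    (hd : ∀ y ∈ Icc (0:ℝ) 1, DifferentiableAt ℝ g y) (hM : ∀ y ∈ Icc (0:ℝ) 1, |deriv g y| ≤ M)
    {y : ℝ} (hx : x ∈ Icc (0:ℝ) 1) (hy : y ∈ Icc (0:ℝ) 1) : |g x - g y| ≤ M * |x - y| := by
  simpa only [Real.norm_eq_abs] using
    (convex_Icc (0:ℝ) 1).norm_image_sub_le_of_norm_deriv_le hd hM hy hx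

lemma le_mul_of_abs_deriv_le_of_map_zero
    (hd : ∀ y ∈ Icc (0:ℝ) 1, DifferentiableAt ℝ g y) (hM : ∀ y ∈ Icc (0:ℝ) 1, |deriv g y| ≤ M)
    (h0 : g 0 = 0) (hx : x ∈ Icc (0:ℝ) 1) : g x ≤ M * x := by
  have := abs_sub_le_of_abs_deriv_le_on_unitInterval hd hM hx (left_mem_Icc.2 zero_le_one)
  rw [h0, sub_zero, sub_zero, abs_of_nonneg hx.1] at this
  exact (le_abs_self _).trans this

lemma le_mul_one_sub_of_abs_deriv_le_of_map_one
    (hd : ∀ y ∈ Icc (0:ℝ) 1, DifferentiableAt ℝ g y) (hM : ∀ y ∈ Icc (0:ℝ) 1, |deriv g y| ≤ M)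
    (h1 : g 1 = 0) (hx : x ∈ Icc (0:ℝ) 1) : g x ≤ M * (1 - x) := by
  have := abs_sub_le_of_abs_deriv_le_on_unitInterval hd hM hx (right_mem_Icc.2 zero_le_one)
  rw [h1, sub_zero, abs_sub_comm, abs_of_nonneg (sub_nonneg.2 hx.2)] at this
  exact (le_abs_self _).trans this

end SlopeBounds

/-- The DFLU interface flux `F_{i+1/2}`, with `gL = f(·, c_i)`, `gR = f(·, c_{i+1})` and
`θL = θ(c_i)`, `θR = θ(c_{i+1})`. -/
def dfluFlux (gL gR : ℝ → ℝ) (θL θR sL sR : ℝ) : ℝ :=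
  min (gL (min sL θL)) (gR (max sR θR))

section DfluFlux

variable {gL gR : ℝ → ℝ} {θL θR sL sR : ℝ}

lemma dfluFlux_nonneg (hL : ∀ x ∈ Icc (0:ℝ) 1, 0 ≤ gL x) (hR : ∀ x ∈ Icc (0:ℝ) 1, 0 ≤ gR x)
    (hθL : 0 ≤ θL) (hθR : θR ≤ 1) (hsL : sL ∈ Icc (0:ℝ) 1) (hsR : sR ∈ Icc (0:ℝ) 1) :
    0 ≤ dfluFlux gL gR θL θR sL sR :=
  le_min (hL _ ⟨le_min hsL.1 hθL, min_le_of_left_le hsL.2⟩)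
    (hR _ ⟨le_max_of_le_left hsR.1, max_le hsR.2 hθR⟩)

lemma dfluFlux_le_mul_left {M : ℝ}
    (hd : ∀ y ∈ Icc (0:ℝ) 1, DifferentiableAt ℝ gL y) (hM : ∀ y ∈ Icc (0:ℝ) 1, |deriv gL y| ≤ M)
    (h0 : gL 0 = 0) (hθL : 0 ≤ θL) (hsL : sL ∈ Icc (0:ℝ) 1) :
    dfluFlux gL gR θL θR sL sR ≤ M * sL := by
  have hM0 : 0 ≤ M := (abs_nonneg _).trans (hM 0 (left_mem_Icc.2 zero_le_one))
  calc dfluFlux gL gR θL θR sL sR ≤ gL (min sL θL) := min_le_left _ _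
    _ ≤ M * min sL θL := le_mul_of_abs_deriv_le_of_map_zero hd hM h0
          ⟨le_min hsL.1 hθL, min_le_of_left_le hsL.2⟩
    _ ≤ M * sL := mul_le_mul_of_nonneg_left (min_le_left _ _) hM0

lemma dfluFlux_le_mul_one_sub_right {M : ℝ}
    (hd : ∀ y ∈ Icc (0:ℝ) 1, DifferentiableAt ℝ gR y) (hM : ∀ y ∈ Icc (0:ℝ) 1, |deriv gR y| ≤ M)
    (h1 : gR 1 = 0) (hθR : θR ≤ 1) (hsR : sR ∈ Icc (0:ℝ) 1) :
    dfluFlux gL gR θL θR sL sR ≤ M * (1 - sR) := by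
  have hM0 : 0 ≤ M := (abs_nonneg _).trans (hM 0 (left_mem_Icc.2 zero_le_one))
  calc dfluFlux gL gR θL θR sL sR ≤ gR (max sR θR) := min_le_right _ _
    _ ≤ M * (1 - max sR θR) := le_mul_one_sub_of_abs_deriv_le_of_map_one hd hM h1
          ⟨le_max_of_le_left hsR.1, max_le hsR.2 hθR⟩
    _ ≤ M * (1 - sR) := mul_le_mul_of_nonneg_left (by linarith [le_max_left sR θR]) hM0

end DfluFlux

lemma sub_mul_sub_mem_unitInterval {s lam M inflow outflow : ℝ} (hs : s ∈ Icc (0:ℝ) 1)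
    (hlam : 0 ≤ lam) (hcfl : lam * M ≤ 1) (hin : 0 ≤ inflow) (hin_le : inflow ≤ M * (1 - s))
    (hout : 0 ≤ outflow) (hout_le : outflow ≤ M * s) :
    s - lam * (outflow - inflow) ∈ Icc (0:ℝ) 1 := by
  obtain ⟨hs0, hs1⟩ := hs
  have := mul_le_mul_of_nonneg_left hout_le hlam
  have := mul_le_mul_of_nonneg_left hin_le hlam
  constructor <;> nlinarith [mul_nonneg hlam hin, mul_nonneg hlam hout]

theorem dflu_saturation_linfty_bound_general
    (f : ℝ → ℝ → ℝ) (θ : ℝ → ℝ) (lam M : ℝ)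
    (hθ : ∀ c ∈ Set.Icc (0:ℝ) 1, θ c ∈ Set.Icc (0:ℝ) 1)
    (hf0 : ∀ c ∈ Set.Icc (0:ℝ) 1, f 0 c = 0)
    (hf1 : ∀ c ∈ Set.Icc (0:ℝ) 1, f 1 c = 0)
    (hnn : ∀ c ∈ Set.Icc (0:ℝ) 1, ∀ s ∈ Set.Icc (0:ℝ) 1, 0 ≤ f s c)
    (hdiff : ∀ c ∈ Set.Icc (0:ℝ) 1, ∀ s ∈ Set.Icc (0:ℝ) 1,
      DifferentiableAt ℝ (fun t => f t c) s)
    (hM : ∀ c ∈ Set.Icc (0:ℝ) 1, ∀ s ∈ Set.Icc (0:ℝ) 1,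
      |deriv (fun t => f t c) s| ≤ M)
    (hlam : 0 < lam) (hcfl : lam * M ≤ 1)
    (s : ℕ → ℤ → ℝ) (c : ℕ → ℤ → ℝ)
    (hc : ∀ n i, c n i ∈ Set.Icc (0:ℝ) 1)
    (hs0 : ∀ i, s 0 i ∈ Set.Icc (0:ℝ) 1)
    (F : ℕ → ℤ → ℝ)
    (hF : ∀ n i, F n i
      = min (f (min (s n i) (θ (c n i))) (c n i))
            (f (max (s n (i+1)) (θ (c n (i+1)))) (c n (i+1))))
    (hscheme : ∀ n i, s (n+1) i = s n i - lam * (F n i - F n (i-1))) :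
    ∀ n i, s n i ∈ Set.Icc (0:ℝ) 1 := by
  intro n
  induction n with
  | zero => exact hs0
  | succ n ih =>
    have hF' : ∀ j, F n j = dfluFlux (fun t => f t (c n j)) (fun t => f t (c n (j+1)))
        (θ (c n j)) (θ (c n (j+1))) (s n j) (s n (j+1)) := hF n
    have hFnn : ∀ j, 0 ≤ F n j := fun j => (hF' j).symm ▸
      dfluFlux_nonneg (hnn _ (hc n j)) (hnn _ (hc n (j+1))) (hθ _ (hc n j)).1
        (hθ _ (hc n (j+1))).2 (ih j) (ih (j+1))
    intro i
    have hFout : F n i ≤ M * s n i := (hF' i).symm ▸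
      dfluFlux_le_mul_left (hdiff _ (hc n i)) (hM _ (hc n i)) (hf0 _ (hc n i))
        (hθ _ (hc n i)).1 (ih i)
    have hFin : F n (i-1) ≤ M * (1 - s n i) := by
      have := dfluFlux_le_mul_one_sub_right (gL := fun t => f t (c n (i-1)))
        (θL := θ (c n (i-1))) (sL := s n (i-1))
        (hdiff _ (hc n i)) (hM _ (hc n i)) (hf1 _ (hc n i)) (hθ _ (hc n i)).2 (ih i)
      rwa [hF', sub_add_cancel]
    rw [hscheme]
    exact sub_mul_sub_mem_unitInterval (ih i) hlam.le hcfl (hFnn _) hFin (hFnn _) hFout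

/-- `L^∞` bound for the saturation computed by the DFLU scheme:
if `0 ≤ s_i^0 ≤ 1` and `λM ≤ 1` then `0 ≤ s_i^n ≤ 1` for all `i, n`. -/
theorem dflu_saturation_linfty_bound
    (f : ℝ → ℝ → ℝ) (θ : ℝ → ℝ) (a' : ℝ → ℝ) (lam M : ℝ)
    (hθ : ∀ c ∈ Set.Icc (0:ℝ) 1, θ c ∈ Set.Icc (0:ℝ) 1)
    (hf0 : ∀ c ∈ Set.Icc (0:ℝ) 1, f 0 c = 0)
    (hf1 : ∀ c ∈ Set.Icc (0:ℝ) 1, f 1 c = 0)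
    (hnn : ∀ c ∈ Set.Icc (0:ℝ) 1, ∀ s ∈ Set.Icc (0:ℝ) 1, 0 ≤ f s c)
    (hdiff : ∀ c ∈ Set.Icc (0:ℝ) 1, ∀ s ∈ Set.Icc (0:ℝ) 1,
      DifferentiableAt ℝ (fun t => f t c) s)
    (hinc : ∀ c ∈ Set.Icc (0:ℝ) 1, MonotoneOn (fun t => f t c) (Set.Icc 0 (θ c)))
    (hdec : ∀ c ∈ Set.Icc (0:ℝ) 1, AntitoneOn (fun t => f t c) (Set.Icc (θ c) 1))
    (hM : ∀ c ∈ Set.Icc (0:ℝ) 1, ∀ s ∈ Set.Icc (0:ℝ) 1,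
      |deriv (fun t => f t c) s| ≤ M)
    (ha' : ∀ c ∈ Set.Icc (0:ℝ) 1, 0 < a' c)
    (hM' : ∀ c ∈ Set.Icc (0:ℝ) 1, ∀ s ∈ Set.Icc (0:ℝ) 1,
      f s c / (s + a' c) ≤ M)
    (hlam : 0 < lam) (hcfl : lam * M ≤ 1)
    (s : ℕ → ℤ → ℝ) (c : ℕ → ℤ → ℝ)
    (hc : ∀ n i, c n i ∈ Set.Icc (0:ℝ) 1)
    (hs0 : ∀ i, s 0 i ∈ Set.Icc (0:ℝ) 1)
    (F : ℕ → ℤ → ℝ)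
    (hF : ∀ n i, F n i
      = min (f (min (s n i) (θ (c n i))) (c n i))
            (f (max (s n (i+1)) (θ (c n (i+1)))) (c n (i+1))))
    (hscheme : ∀ n i, s (n+1) i = s n i - lam * (F n i - F n (i-1))) :
    ∀ n i, s n i ∈ Set.Icc (0:ℝ) 1 :=
  dflu_saturation_linfty_bound_general f θ lam M hθ hf0 hf1 hnn hdiff hM hlam hcfl s c hc hs0 F hF
    hscheme
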